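/- All connected components of the separated directed quiver Q̄ of a finite connected quiver Q are isomorphic as quivers. More precisely, for any arrow i₀ → j₀ in Q, the map (i,n) ↦ (i, n−1) induces an isomorphism from the connected component of (i₀,0) onto the connected component of (j₀,0). -/

import Mathlib

/-- One (directed) step in the separated directed quiver `Q̄`. -/
def SepStep {V E : Type} (s t : E → V) (x y : V × ℤ) : Prop :=
  ∃ e : E, x.1 = s e ∧ y.1 = t e ∧ y.2 = x.2 + 1

/-- Connectedness in the underlying undirected graph of the separated directed quiver. -/
def SepConnected {V E : Type} (s t : E → V) : V × ℤ → V × ℤ → Prop :=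
  Relation.ReflTransGen (fun x y => SepStep s t x y ∨ SepStep s t y x)

/-- Connectedness in the underlying undirected graph of `Q`. -/
def QConnected {V E : Type} (s t : E → V) : V → V → Prop :=
  Relation.ReflTransGen (fun a b => (∃ e, s e = a ∧ t e = b) ∨ (∃ e, s e = b ∧ t e = a))

/- Translating the level by a constant `k` is an automorphism of `Q̄`, so it maps connected
components onto connected components. The arrow `(i₀, 0) → (j₀, 1)` puts `(j₀, 1)` in the
component of `(i₀, 0)`, and translation by `-1` carries that component onto the component of
`(j₀, 0)`. -/

section SeparatedQuiver

variable {V E : Type} (s t : E → V)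

theorem sepStep_shift_iff (k : ℤ) {x y : V × ℤ} :
    SepStep s t (x.1, x.2 + k) (y.1, y.2 + k) ↔ SepStep s t x y := by
  refine exists_congr fun e => and_congr_right' (and_congr_right' ?_)
  dsimp only
  omega

theorem SepConnected.symm {x y : V × ℤ} (h : SepConnected s t x y) : SepConnected s t y x := by
  induction h with
  | refl => exact Relation.ReflTransGen.refl
  | tail _ hstep ih => exact ih.head hstep.symm

theorem SepConnected.shift (k : ℤ) {x y : V × ℤ} (h : SepConnected s t x y) :
    SepConnected s t (x.1, x.2 + k) (y.1, y.2 + k) := by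
  induction h with
  | refl => exact Relation.ReflTransGen.refl
  | tail _ hstep ih =>
    exact ih.tail (hstep.imp (sepStep_shift_iff s t k).2 (sepStep_shift_iff s t k).2)

theorem sepConnected_shift_iff (k : ℤ) {x y : V × ℤ} :
    SepConnected s t (x.1, x.2 + k) (y.1, y.2 + k) ↔ SepConnected s t x y := by
  refine ⟨fun h => ?_, SepConnected.shift s t k⟩
  simpa using h.shift s t (-k)

end SeparatedQuiver

theorem stmt3_general {V E : Type} (s t : E → V)
    (e₀ : E) (i₀ j₀ : V) (hs : s e₀ = i₀) (ht : t e₀ = j₀) :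
    Function.Bijective (fun x : V × ℤ => (x.1, x.2 - 1)) ∧
    (∀ x y : V × ℤ, SepStep s t x y ↔ SepStep s t (x.1, x.2 - 1) (y.1, y.2 - 1)) ∧
    (∀ x : V × ℤ, SepConnected s t (i₀, 0) x ↔
      SepConnected s t (j₀, 0) (x.1, x.2 - 1)) := by
  have hij : SepConnected s t (i₀, 0) (j₀, 1) :=
    Relation.ReflTransGen.single (Or.inl ⟨e₀, hs.symm, ht.symm, rfl⟩)
  refine ⟨(Equiv.prodCongr (Equiv.refl V) (Equiv.subRight 1)).bijective,
    fun x y => ?_, fun x => ?_⟩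
  · simpa only [sub_eq_add_neg] using (sepStep_shift_iff s t (-1)).symm
  · calc SepConnected s t (i₀, 0) x
        ↔ SepConnected s t (j₀, 1) x := ⟨hij.symm.trans, hij.trans⟩
      _ ↔ SepConnected s t (j₀, 1 + -1) (x.1, x.2 + -1) := (sepConnected_shift_iff s t (-1)).symm
      _ ↔ SepConnected s t (j₀, 0) (x.1, x.2 - 1) := by simp only [sub_eq_add_neg]; norm_num

/-- For any arrow `i₀ → j₀` of a finite connected quiver `Q`, the shift
`(i,n) ↦ (i,n−1)` is a bijection of `Q̄` preserving arrows which maps the connected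
component of `(i₀,0)` onto the connected component of `(j₀,0)`; hence all connected
components of `Q̄` are isomorphic. -/
theorem stmt3 {V E : Type} [Fintype V] [Fintype E] (s t : E → V)
    (hconn : ∀ u v : V, QConnected s t u v)
    (e₀ : E) (i₀ j₀ : V) (hs : s e₀ = i₀) (ht : t e₀ = j₀) :
    Function.Bijective (fun x : V × ℤ => (x.1, x.2 - 1)) ∧
    (∀ x y : V × ℤ, SepStep s t x y ↔ SepStep s t (x.1, x.2 - 1) (y.1, y.2 - 1)) ∧
    (∀ x : V × ℤ, SepConnected s t (i₀, 0) x ↔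
      SepConnected s t (j₀, 0) (x.1, x.2 - 1)) :=
  stmt3_general s t e₀ i₀ j₀ hs ht
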